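/- Let A¹, …, A^M ∈ ℝ^{m×n} have unit-norm columns and suppose M − 2·Σ_{1≤i<j≤M} M_D(Aⁱ, Aʲ) > 0. Then M(Σ_{i=1}^M Aⁱ) ≤ (Σ_{i=1}^M M(Aⁱ) + 2·Σ_{1≤i<j≤M} M_OD(Aⁱ, Aʲ)) / (M − 2·Σ_{1≤i<j≤M} M_D(Aⁱ, Aʲ)). -/

import Mathlib

open Classical Kronecker

/-- Number of nonzero entries of a vector. -/
noncomputable def sparsity {n : Type*} (x : n → ℝ) : ℕ := Set.ncard {i | x i ≠ 0}

/-- The spark of a matrix: the minimal number of nonzero entries of a nonzero kernel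
vector; if the kernel is trivial we use the convention `spark A = (number of columns) + 1`. -/
noncomputable def spark {m n : Type*} [Fintype m] [Fintype n] (A : Matrix m n ℝ) : ℕ :=
  if ∃ x : n → ℝ, x ≠ 0 ∧ A.mulVec x = 0 then
    sInf {k | ∃ x : n → ℝ, x ≠ 0 ∧ A.mulVec x = 0 ∧ sparsity x = k}
  else Fintype.card n + 1

/-- Mutual incoherence: the largest absolute inner product of two distinct columns. -/
noncomputable def mutInc {m n : Type*} [Fintype m] (A : Matrix m n ℝ) : ℝ :=
  sSup {v | ∃ i j, i ≠ j ∧ v = |∑ k, A k i * A k j|}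

/-- Off-diagonal mutual incoherence of two matrices. -/
noncomputable def mutIncOD {m n : Type*} [Fintype m] (A B : Matrix m n ℝ) : ℝ :=
  sSup {v | ∃ i j, i ≠ j ∧ v = |∑ k, A k i * B k j|}

/-- Diagonal mutual incoherence of two matrices. -/
noncomputable def mutIncD {m n : Type*} [Fintype m] (A B : Matrix m n ℝ) : ℝ :=
  sSup {v | ∃ i, v = |∑ k, A k i * B k i|}

/-- Mutual incoherence of a matrix whose columns are renormalized. -/
noncomputable def mutIncN {m n : Type*} [Fintype m] (C : Matrix m n ℝ) : ℝ :=
  sSup {v | ∃ i j, i ≠ j ∧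
    v = |∑ k, C k i * C k j| /
        (Real.sqrt (∑ k, (C k i) ^ 2) * Real.sqrt (∑ k, (C k j) ^ 2))}

/-- The `k`-restricted isometry constant of a matrix. -/
noncomputable def ripConst {m n : Type*} [Fintype m] [Fintype n] (k : ℕ)
    (A : Matrix m n ℝ) : ℝ :=
  sInf {δ | 0 ≤ δ ∧ ∀ x : n → ℝ, sparsity x ≤ k →
    (1 - δ) * ∑ i, (x i) ^ 2 ≤ ∑ i, (A.mulVec x i) ^ 2 ∧
    ∑ i, (A.mulVec x i) ^ 2 ≤ (1 + δ) * ∑ i, (x i) ^ 2}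

/-- Iterated Kronecker product of a family of matrices (up to the standard
reindexing of the row/column index sets). -/
noncomputable def kronFamily {N : ℕ} {m n : Fin N → ℕ}
    (A : ∀ i, Matrix (Fin (m i)) (Fin (n i)) ℝ) :
    Matrix (∀ i, Fin (m i)) (∀ i, Fin (n i)) ℝ :=
  fun r c => ∏ i, A i (r i) (c i)

/-!
Let `s_c = ∑ᵢ aⁱ_c` be the columns of `S = ∑ᵢ Aⁱ`. Expanding `⟨s_c, s_d⟩ = ∑_{i,j} ⟨aⁱ_c, aʲ_d⟩`
and splitting the pairs `(i, j)` into `i = j`, `i < j` and `i > j`: for `c ≠ d` the diagonal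
terms are bounded by `M(Aⁱ)` and each pair `{i, j}` contributes at most `2 M_OD(Aⁱ, Aʲ)`;
for `c = d` the diagonal terms are exactly `1` and each pair contributes at least
`-2 M_D(Aⁱ, Aʲ)`. So the numerator bounds every `|⟨s_c, s_d⟩|` and the denominator every `‖s_c‖²`.
-/

theorem Finset.sum_prod_self_eq_sum_diag_add_sum_lt {ι M : Type*} [Fintype ι] [LinearOrder ι]
    [AddCommMonoid M] (g : ι × ι → M) :
    ∑ p, g p = ∑ i, g (i, i) + ∑ p : ι × ι with p.1 < p.2, (g p + g p.swap) := by
  have hdiag : ∑ i, g (i, i) = ∑ p with p.1 = p.2, g p :=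
    Finset.sum_nbij' (fun i => (i, i)) Prod.fst (by simp) (by simp) (by simp)
      (fun p hp => Prod.ext rfl (by simpa using hp)) (by simp)
  have hswap : ∑ p : ι × ι with p.1 < p.2, g p.swap = ∑ p : ι × ι with p.2 < p.1, g p :=
    Finset.sum_nbij' Prod.swap Prod.swap (by simp) (by simp) (by simp) (by simp) (by simp)
  rw [Finset.sum_add_distrib, hdiag, hswap, ← Finset.sum_union, ← Finset.sum_union]
  · congr 1
    ext p
    simp [Classical.em]
  all_goals
    rw [Finset.disjoint_left]
    grind

section Incoherence

variable {m n : Type*} [Fintype m]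

theorem mutIncOD_nonneg (A B : Matrix m n ℝ) : 0 ≤ mutIncOD A B :=
  Real.sSup_nonneg <| by rintro v ⟨i, j, -, rfl⟩; exact abs_nonneg _

theorem mutInc_nonneg (A : Matrix m n ℝ) : 0 ≤ mutInc A := mutIncOD_nonneg A A

variable [Finite n]

theorem abs_le_mutIncOD (A B : Matrix m n ℝ) {i j : n} (hij : i ≠ j) :
    |∑ k, A k i * B k j| ≤ mutIncOD A B :=
  le_csSup ((Set.finite_range fun p : n × n => |∑ k, A k p.1 * B k p.2|).subset
    (by rintro v ⟨i, j, -, rfl⟩; exact ⟨(i, j), rfl⟩)).bddAbove ⟨i, j, hij, rfl⟩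

theorem abs_le_mutInc (A : Matrix m n ℝ) {i j : n} (hij : i ≠ j) :
    |∑ k, A k i * A k j| ≤ mutInc A :=
  abs_le_mutIncOD A A hij

theorem abs_le_mutIncD (A B : Matrix m n ℝ) (i : n) : |∑ k, A k i * B k i| ≤ mutIncD A B :=
  le_csSup ((Set.finite_range fun i => |∑ k, A k i * B k i|).subset
    (by rintro v ⟨i, rfl⟩; exact ⟨i, rfl⟩)).bddAbove ⟨i, rfl⟩

end Incoherence

theorem mutIncN_le_div {m n : Type*} [Fintype m] (C : Matrix m n ℝ) {a b : ℝ} (ha : 0 ≤ a)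
    (hb : 0 < b) (hinner : ∀ c d, c ≠ d → |∑ k, C k c * C k d| ≤ a)
    (hnorm : ∀ c, b ≤ ∑ k, C k c ^ 2) : mutIncN C ≤ a / b := by
  refine Real.sSup_le ?_ (div_nonneg ha hb.le)
  rintro v ⟨c, d, hcd, rfl⟩
  refine div_le_div₀ ha (hinner c d hcd) hb ?_
  calc b = √b * √b := (Real.mul_self_sqrt hb.le).symm
    _ ≤ √(∑ k, C k c ^ 2) * √(∑ k, C k d ^ 2) := by gcongr <;> apply hnorm

section SumOfMatrices

variable {ι m n : Type*} [Fintype ι] [LinearOrder ι] [Fintype m] (A : ι → Matrix m n ℝ)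

theorem col_inner_sum_eq (c d : n) :
    ∑ k, (∑ i, A i) k c * (∑ i, A i) k d =
      ∑ i, ∑ k, A i k c * A i k d +
        ∑ p : ι × ι with p.1 < p.2,
          (∑ k, A p.1 k c * A p.2 k d + ∑ k, A p.2 k c * A p.1 k d) := by
  have hexpand : ∑ k, (∑ i, A i) k c * (∑ i, A i) k d =
      ∑ p : ι × ι, ∑ k, A p.1 k c * A p.2 k d := by
    simp only [Matrix.sum_apply, Finset.sum_mul_sum, Fintype.sum_prod_type]
    rw [Finset.sum_comm]
    exact Finset.sum_congr rfl fun i _ => Finset.sum_comm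
  rw [hexpand, Finset.sum_prod_self_eq_sum_diag_add_sum_lt]
  rfl

variable [Finite n]

theorem card_sub_le_col_norm_sq_sum (hA : ∀ i j, ∑ k, A i k j ^ 2 = 1) (c : n) :
    Fintype.card ι - 2 * ∑ p : ι × ι with p.1 < p.2, mutIncD (A p.1) (A p.2) ≤
      ∑ k, (∑ i, A i) k c ^ 2 := by
  have hdiag (i : ι) : ∑ k, A i k c * A i k c = 1 := by simpa only [sq] using hA i c
  have hoff (p : ι × ι) :
      -(2 * mutIncD (A p.1) (A p.2)) ≤
        ∑ k, A p.1 k c * A p.2 k c + ∑ k, A p.2 k c * A p.1 k c := by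
    have h := neg_abs_le (∑ k, A p.1 k c * A p.2 k c)
    have hD := abs_le_mutIncD (A p.1) (A p.2) c
    simp only [mul_comm (A p.2 _ c)]
    linarith
  simp only [sq, col_inner_sum_eq, hdiag]
  rw [Finset.mul_sum, sub_eq_add_neg, ← Finset.sum_neg_distrib]
  simpa using Finset.sum_le_sum fun p _ => hoff p

theorem abs_col_inner_sum_eq_le {c d : n} (hcd : c ≠ d) :
    |∑ k, (∑ i, A i) k c * (∑ i, A i) k d| ≤
      ∑ i, mutInc (A i) + 2 * ∑ p : ι × ι with p.1 < p.2, mutIncOD (A p.1) (A p.2) := by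
  have hoff (p : ι × ι) :
      |∑ k, A p.1 k c * A p.2 k d + ∑ k, A p.2 k c * A p.1 k d| ≤
        2 * mutIncOD (A p.1) (A p.2) := by
    have h₁ := abs_le_mutIncOD (A p.1) (A p.2) hcd
    have h₂ := abs_le_mutIncOD (A p.1) (A p.2) hcd.symm
    simp only [mul_comm (A p.2 _ c)]
    linarith [abs_add_le (∑ k, A p.1 k c * A p.2 k d) (∑ k, A p.1 k d * A p.2 k c)]
  rw [col_inner_sum_eq, Finset.mul_sum]
  refine (abs_add_le _ _).trans (add_le_add ?_ ?_)
  · exact (Finset.abs_sum_le_sum_abs _ _).trans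
      (Finset.sum_le_sum fun i _ => abs_le_mutInc (A i) hcd)
  · exact (Finset.abs_sum_le_sum_abs _ _).trans (Finset.sum_le_sum fun p _ => hoff p)

end SumOfMatrices

theorem stmt19 {m n M : ℕ} (A : Fin M → Matrix (Fin m) (Fin n) ℝ)
    (hA : ∀ i j, ∑ k, (A i k j) ^ 2 = 1)
    (hpos : 0 < (M : ℝ) - 2 * ∑ p ∈ Finset.univ.filter
        (fun p : Fin M × Fin M => p.1 < p.2), mutIncD (A p.1) (A p.2)) :
    mutIncN (∑ i, A i) ≤
      ((∑ i, mutInc (A i)) + 2 * ∑ p ∈ Finset.univ.filter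
          (fun p : Fin M × Fin M => p.1 < p.2), mutIncOD (A p.1) (A p.2)) /
      ((M : ℝ) - 2 * ∑ p ∈ Finset.univ.filter
          (fun p : Fin M × Fin M => p.1 < p.2), mutIncD (A p.1) (A p.2)) := by
  have hnum : 0 ≤ ∑ i, mutInc (A i) + 2 * ∑ p ∈ Finset.univ.filter
      (fun p : Fin M × Fin M => p.1 < p.2), mutIncOD (A p.1) (A p.2) :=
    add_nonneg (Finset.sum_nonneg fun i _ => mutInc_nonneg _)
      (mul_nonneg zero_le_two (Finset.sum_nonneg fun p _ => mutIncOD_nonneg _ _))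
  refine mutIncN_le_div _ hnum hpos (fun c d hcd => abs_col_inner_sum_eq_le A hcd) fun c => ?_
  simpa using card_sub_le_col_norm_sq_sum A hA c
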